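/- arXiv:2008.12105 — 3 statements merged into one kernel-verified Lean document; each statement's English description precedes it below -/
import Mathlib

section
/- Let n ≥ 2, let S = S^{n-1} ⊂ ℝⁿ be the unit sphere with surface measure σ, let e₁ ∈ S be the first standard basis vector, and let ℓ : ℝ → ℝ be continuous. Define ι₁ = ∫_S ℓ(‖v − e₁‖) (v · e₁) dσ(v). Then for every v̄ ∈ S, ∫_S ℓ(‖v̄ − v‖) v dσ(v) = ι₁ v̄ (as vectors in ℝⁿ); in particular each coordinate function v ↦ v_j is an eigenfunction of the turning operator T with eigenvalue ι₁. -/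
open MeasureTheory Metric RealInnerProductSpace

/-- `ℝⁿ` as a Euclidean space. -/
abbrev Eu (n : ℕ) := EuclideanSpace ℝ (Fin n)

/-- The unit sphere `S^{n-1} ⊂ ℝⁿ`. -/
abbrev Sph (n : ℕ) := Metric.sphere (0 : Eu n) 1

/-- The surface measure `σ` on the unit sphere `S^{n-1} ⊂ ℝⁿ`. -/
noncomputable def sphereMeasure (n : ℕ) : Measure (Sph n) :=
  (volume : Measure (Eu n)).toSphere

/-! The turning operator commutes with every linear isometry `f` (substitute `v ↦ f v`, which
preserves `σ`), so `w = ∫ ℓ(‖u − v‖) v dσ(v)` is fixed by every linear isometry fixing `u`.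
The reflection in the hyperplane orthogonal to `y = w − ⟪w, u⟫ u` fixes `u` and negates `y`,
hence `y = 0` and `w = ⟪w, u⟫ u`. Transporting this identity by a reflection carrying `e₁` to
`u` shows that the coefficient at `u` equals the one at `e₁`, which is `ι₁`. -/

open Set
open scoped Pointwise

lemma LinearEquiv.smul_preimage {R M N : Type*} [Semiring R] [AddCommMonoid M]
    [AddCommMonoid N] [Module R M] [Module R N] (f : M ≃ₗ[R] N) (s : Set R) (A : Set N) :
    s • f ⁻¹' A = f ⁻¹' (s • A) := by
  rw [← f.image_symm_eq_preimage, ← f.image_symm_eq_preimage, ← image2_smul, ← image2_smul,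
    image_image2_distrib_right fun c x => map_smul f.symm c x]

section NormedSpace

variable {E : Type*} [NormedAddCommGroup E] [NormedSpace ℝ E]

noncomputable def LinearIsometryEquiv.sphereHomeomorph (f : E ≃ₗᵢ[ℝ] E) (r : ℝ) :
    sphere (0 : E) r ≃ₜ sphere (0 : E) r :=
  f.toHomeomorph.subtype fun x => by simp

variable [MeasurableSpace E] [BorelSpace E]

lemma LinearIsometryEquiv.measurePreserving_sphereHomeomorph {μ : Measure E}
    {f : E ≃ₗᵢ[ℝ] E} (hf : MeasurePreserving f μ μ) :
    MeasurePreserving (f.sphereHomeomorph 1) μ.toSphere μ.toSphere := by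
  have hF := (f.sphereHomeomorph 1).measurable
  have hf' : MeasurePreserving f.toHomeomorph.toMeasurableEquiv μ μ := hf
  refine ⟨hF, Measure.ext fun s hs => ?_⟩
  have hcoe : ((↑) '' (f.sphereHomeomorph 1 ⁻¹' s) : Set E) = f ⁻¹' ((↑) '' s) := by
    ext x
    simp only [mem_image, mem_preimage, Subtype.exists, mem_sphere_zero_iff_norm,
      exists_and_right, exists_eq_right, LinearIsometryEquiv.norm_map]
    rfl
  rw [Measure.map_apply hF hs, Measure.toSphere_apply' _ (hF hs), Measure.toSphere_apply' _ hs,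
    hcoe]
  exact congrArg _
    ((congrArg μ (f.toLinearEquiv.smul_preimage _ _)).trans (hf'.measure_preimage_equiv _))

noncomputable def turningOperator {F : Type*} [NormedAddCommGroup F] [NormedSpace ℝ F]
    (ν : Measure (sphere (0 : E) 1)) (ℓ : ℝ → ℝ) (φ : sphere (0 : E) 1 → F) (x : E) : F :=
  ∫ v, ℓ ‖x - v‖ • φ v ∂ν

lemma turningOperator_coe_map [CompleteSpace E] {ν : Measure (sphere (0 : E) 1)} {ℓ : ℝ → ℝ}
    (hν : ∀ f : E ≃ₗᵢ[ℝ] E, MeasurePreserving (f.sphereHomeomorph 1) ν ν)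
    (f : E ≃ₗᵢ[ℝ] E) (x : E) :
    turningOperator ν ℓ (↑) (f x) = f (turningOperator ν ℓ (↑) x) := calc
  _ = ∫ v, ℓ ‖f x - f v‖ • f v ∂ν :=
    ((hν f).integral_comp (f.sphereHomeomorph 1).measurableEmbedding
      (fun v => ℓ ‖f x - v‖ • (v : E))).symm
  _ = ∫ v, f (ℓ ‖x - v‖ • (v : E)) ∂ν := by simp only [← map_sub, f.norm_map, map_smul]
  _ = _ := f.toLinearIsometry.integral_comp_comm _

end NormedSpace

section InnerProductSpace

variable {E : Type*} [NormedAddCommGroup E] [InnerProductSpace ℝ E]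

lemma eq_inner_smul_of_forall_map_eq {x w : E} (hx : ‖x‖ = 1)
    (h : ∀ f : E ≃ₗᵢ[ℝ] E, f x = x → f w = w) : w = ⟪w, x⟫ • x := by
  set c := ⟪w, x⟫
  set y := w - c • x
  have hw : w = y + c • x := (sub_add_cancel w _).symm
  have hyx : ⟪y, x⟫ = 0 := by simp [y, c, inner_sub_left, inner_smul_left, hx]
  set ρ := (ℝ ∙ y)ᗮ.reflection
  have hρx : ρ x = x := Submodule.reflection_mem_subspace_eq_self
    (Submodule.mem_orthogonal_singleton_iff_inner_right.2 hyx)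
  have hρy : ρ y = -y := Submodule.reflection_orthogonalComplement_singleton_eq_neg y
  have hρw : ρ w = -y + c • x := by rw [hw, map_add, map_smul, hρx, hρy]
  have hy : y = 0 := by
    have hy_neg : -y = y := add_right_cancel ((hρw.symm.trans (h ρ hρx)).trans hw)
    have : IsAddTorsionFree E := .of_isTorsionFree ℝ E
    exact neg_eq_self.1 hy_neg
  rw [hw, hy, zero_add]

variable [MeasurableSpace E] [BorelSpace E] {ν : Measure (sphere (0 : E) 1)} {ℓ : ℝ → ℝ}

lemma inner_turningOperator_coe [FiniteDimensional ℝ E] [IsFiniteMeasure ν]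
    (hℓ : Continuous ℓ) (x y : E) :
    ⟪turningOperator ν ℓ (↑) x, y⟫ = ∫ v, ℓ ‖x - v‖ * ⟪(v : E), y⟫ ∂ν := by
  have hint : Integrable (fun v : sphere (0 : E) 1 => ℓ ‖x - v‖ • (v : E)) ν := by
    have hcont : Continuous fun v : sphere (0 : E) 1 => ℓ ‖x - v‖ • (v : E) := by fun_prop
    exact hcont.integrable_of_hasCompactSupport (.of_compactSpace _)
  rw [real_inner_comm, turningOperator, ← integral_inner hint]
  simp only [inner_smul_right, real_inner_comm]

lemma turningOperator_coe_eq_inner_smul [CompleteSpace E]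
    (hν : ∀ f : E ≃ₗᵢ[ℝ] E, MeasurePreserving (f.sphereHomeomorph 1) ν ν)
    {x y : E} (hx : ‖x‖ = 1) (hy : ‖y‖ = 1) :
    turningOperator ν ℓ (↑) y = ⟪turningOperator ν ℓ (↑) x, x⟫ • y := by
  have hTx : turningOperator ν ℓ (↑) x = ⟪turningOperator ν ℓ (↑) x, x⟫ • x :=
    eq_inner_smul_of_forall_map_eq hx fun f hf => by rw [← turningOperator_coe_map hν, hf]
  have hρ : (ℝ ∙ (x - y))ᗮ.reflection x = y := Submodule.reflection_sub (hx.trans hy.symm)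
  rw [← hρ, turningOperator_coe_map hν, hTx, map_smul, ← hTx]

end InnerProductSpace

/-- With `ι₁ = ∫_S ℓ(‖v − e₁‖) (v · e₁) dσ(v)`, for every `u ∈ S` one has
`∫_S ℓ(‖u − v‖) v dσ(v) = ι₁ u`: each coordinate function is an eigenfunction of the
turning operator with eigenvalue `ι₁`. -/
theorem turning_operator_coordinate_eigenfunctions (n : ℕ) (hn : 2 ≤ n)
    (ℓ : ℝ → ℝ) (hℓ : Continuous ℓ)
    (e₁ : Eu n) (he₁ : e₁ = EuclideanSpace.single (⟨0, by omega⟩ : Fin n) 1)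
    (ι₁ : ℝ)
    (hι₁ : ι₁ = ∫ v, ℓ ‖(v : Eu n) - e₁‖ * ⟪(v : Eu n), e₁⟫ ∂(sphereMeasure n)) :
    ∀ u : Sph n,
      ∫ v, ℓ ‖(u : Eu n) - (v : Eu n)‖ • (v : Eu n) ∂(sphereMeasure n)
        = ι₁ • (u : Eu n) := by
  intro u
  have hν : ∀ f : Eu n ≃ₗᵢ[ℝ] Eu n,
      MeasurePreserving (f.sphereHomeomorph 1) (sphereMeasure n) (sphereMeasure n) :=
    fun f => f.measurePreserving_sphereHomeomorph f.measurePreserving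
  have : IsFiniteMeasure (sphereMeasure n) := by unfold sphereMeasure; infer_instance
  have he₁_norm : ‖e₁‖ = 1 := by simp [he₁]
  have hι : ⟪turningOperator (sphereMeasure n) ℓ (↑) e₁, e₁⟫ = ι₁ := by
    rw [inner_turningOperator_coe hℓ, hι₁]
    simp_rw [norm_sub_rev e₁]
  change turningOperator (sphereMeasure n) ℓ (↑) (u : Eu n) = ι₁ • (u : Eu n)
  rw [turningOperator_coe_eq_inner_smul hν he₁_norm (norm_eq_of_mem_sphere u), hι]
end

section
/- Let n ≥ 2, let S = S^{n-1} ⊂ ℝⁿ be the unit sphere with surface measure σ, and let p, q : S → ℝ be integrable. With K(v) = ∫_S ∫_{V⁺(v,w)} ν·(v − w) [ p(v') q(w') − p(v) q(w) ] dσ(ν) dσ(w), where V⁺(v,w) = { ν ∈ S : ν·(v − w) > 0 }, v' = v − 2(v·ν)ν and w' = w − 2(w·ν)ν, the first velocity moment of K satisfies: ∫_S v K(v) dσ(v) = −2 ∫_S ∫_S ∫_{V⁺(v,w)} (v·ν) (ν·(v − w)) ν p(v) q(w) dσ(ν) dσ(w) dσ(v) (an identity between vectors in ℝⁿ). -/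
open MeasureTheory Metric RealInnerProductSpace

/-- The post-interaction velocity `v' = v − 2 (v·ν) ν` of `v ∈ S` for a normal `ν ∈ S`,
as a point of the sphere. -/
noncomputable def reflect {n : ℕ} (ν v : Sph n) : Sph n :=
  ⟨(v : Eu n) - (2 * ⟪(v : Eu n), (ν : Eu n)⟫) • (ν : Eu n), by
    rw [mem_sphere_zero_iff_norm]
    have hv : ‖(v : Eu n)‖ = 1 := mem_sphere_zero_iff_norm.mp v.2
    have hν : ‖(ν : Eu n)‖ = 1 := mem_sphere_zero_iff_norm.mp ν.2
    have h : ‖(v : Eu n) - (2 * ⟪(v : Eu n), (ν : Eu n)⟫) • (ν : Eu n)‖ ^ 2 = 1 := by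
      rw [norm_sub_sq_real, real_inner_smul_right, norm_smul, hv]
      simp [hν, mul_pow]
      ring
    nlinarith [norm_nonneg ((v : Eu n) - (2 * ⟪(v : Eu n), (ν : Eu n)⟫) • (ν : Eu n))]⟩

/-!
For a fixed normal `ν`, the substitution `(v, w) ↦ (v', w')` preserves `σ ⊗ σ` and reverses the
sign of `ν · (v − w)`, while `ν ↦ −ν` restores that sign and leaves `v'`, `w'` unchanged. Together
they form a measure-preserving involution of `S × S × S` fixing `max (ν · (v − w)) 0`, which
turns the gain term `p(v') q(w') ψ(v)` into `p(v) q(w) ψ(v')`; this is the weak form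
`∫ K ψ = ∫∫∫ max (ν · (v − w)) 0 p(v) q(w) (ψ(v') − ψ(v))`. For `ψ(v) = v` one has
`v' − v = −2 (v · ν) ν`.
-/

open scoped Pointwise in
theorem LinearEquiv.set_smul_preimage {R M N : Type*} [Semiring R] [AddCommMonoid M]
    [AddCommMonoid N] [Module R M] [Module R N] (e : M ≃ₗ[R] N) (T : Set R) (A : Set N) :
    T • (e ⁻¹' A) = e ⁻¹' (T • A) := by
  rw [← e.symm_symm, ← e.symm.image_eq_preimage_symm, ← e.symm.image_eq_preimage_symm,
    ← Set.image2_smul, ← Set.image2_smul,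
    Set.image_image2_distrib_right fun a b => e.symm.map_smul a b]

theorem setIntegral_pos_smul_eq_integral_max {α E : Type*} [MeasurableSpace α]
    [NormedAddCommGroup E] [NormedSpace ℝ E] {μ : Measure α} {g : α → ℝ} (hg : Measurable g)
    (f : α → E) :
    ∫ x in {x | 0 < g x}, g x • f x ∂μ = ∫ x, max (g x) 0 • f x ∂μ := by
  rw [← integral_indicator (measurableSet_lt measurable_const hg)]
  congr 1 with x
  by_cases h : 0 < g x
  · simp [h, h.le]
  · simp [h, not_lt.1 h]

namespace LinearIsometryEquiv

variable {E : Type*} [NormedAddCommGroup E] [NormedSpace ℝ E]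

def sphereMap (e : E ≃ₗᵢ[ℝ] E) (v : sphere (0 : E) 1) : sphere (0 : E) 1 :=
  ⟨e v, by simp⟩

@[simp]
theorem coe_sphereMap (e : E ≃ₗᵢ[ℝ] E) (v : sphere (0 : E) 1) : (e.sphereMap v : E) = e v := rfl

theorem continuous_sphereMap (e : E ≃ₗᵢ[ℝ] E) : Continuous e.sphereMap :=
  (e.continuous.comp continuous_subtype_val).subtype_mk _

theorem image_coe_preimage_sphereMap (e : E ≃ₗᵢ[ℝ] E) (s : Set (sphere (0 : E) 1)) :
    ((↑) '' (e.sphereMap ⁻¹' s) : Set E) = e ⁻¹' ((↑) '' s) := by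
  ext x
  constructor
  · rintro ⟨v, hv, rfl⟩
    exact ⟨e.sphereMap v, hv, rfl⟩
  · rintro ⟨v, hv, hx⟩
    have hx1 : x ∈ sphere (0 : E) 1 := by
      rw [mem_sphere_zero_iff_norm, ← e.norm_map, ← hx, norm_eq_of_mem_sphere]
    refine ⟨⟨x, hx1⟩, ?_, rfl⟩
    rwa [Set.mem_preimage, show e.sphereMap ⟨x, hx1⟩ = v from Subtype.ext hx.symm]

theorem measurePreserving_sphereMap [MeasurableSpace E] [BorelSpace E] {μ : Measure E}
    (e : E ≃ₗᵢ[ℝ] E) (he : MeasurePreserving e μ μ) :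
    MeasurePreserving e.sphereMap μ.toSphere μ.toSphere := by
  refine ⟨e.continuous_sphereMap.measurable, Measure.ext fun s hs => ?_⟩
  rw [Measure.map_apply e.continuous_sphereMap.measurable hs,
    Measure.toSphere_apply' _ (e.continuous_sphereMap.measurable hs), Measure.toSphere_apply' _ hs,
    image_coe_preimage_sphereMap]
  exact congrArg (_ * ·) ((congrArg μ (e.toLinearEquiv.set_smul_preimage _ _)).trans
    (he.measure_preimage_emb e.toHomeomorph.measurableEmbedding _))

end LinearIsometryEquiv

instance (n : ℕ) : IsFiniteMeasure (sphereMeasure n) :=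
  inferInstanceAs (IsFiniteMeasure (volume : Measure (Eu n)).toSphere)

variable {n : ℕ}

theorem measurePreserving_sphereMap_sphereMeasure (e : Eu n ≃ₗᵢ[ℝ] Eu n) :
    MeasurePreserving e.sphereMap (sphereMeasure n) (sphereMeasure n) :=
  e.measurePreserving_sphereMap e.measurePreserving

theorem coe_reflect (ν v : Sph n) :
    (reflect ν v : Eu n) = (v : Eu n) - (2 * ⟪(v : Eu n), (ν : Eu n)⟫) • (ν : Eu n) := rfl

theorem reflect_eq_sphereMap (ν : Sph n) :
    reflect ν = (Submodule.reflection (ℝ ∙ (ν : Eu n))ᗮ).sphereMap := by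
  ext v : 2
  rw [coe_reflect, LinearIsometryEquiv.coe_sphereMap, Submodule.reflection_orthogonal_apply,
    Submodule.reflection_apply, Submodule.starProjection_unit_singleton ℝ (norm_eq_of_mem_sphere ν),
    real_inner_comm]
  module

theorem measurePreserving_reflect (ν : Sph n) :
    MeasurePreserving (reflect ν) (sphereMeasure n) (sphereMeasure n) := by
  rw [reflect_eq_sphereMap]
  exact measurePreserving_sphereMap_sphereMeasure _

theorem measurePreserving_neg_sphere :
    MeasurePreserving (Neg.neg : Sph n → Sph n) (sphereMeasure n) (sphereMeasure n) :=
  measurePreserving_sphereMap_sphereMeasure (LinearIsometryEquiv.neg ℝ)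

@[fun_prop]
theorem Continuous.reflect {X : Type*} [TopologicalSpace X] {f g : X → Sph n}
    (hf : Continuous f) (hg : Continuous g) : Continuous fun x => reflect (f x) (g x) :=
  Continuous.subtype_mk (by fun_prop) _

theorem real_inner_self_sphere (ν : Sph n) : ⟪(ν : Eu n), (ν : Eu n)⟫ = 1 := by
  rw [real_inner_self_eq_norm_sq, norm_eq_of_mem_sphere, one_pow]

theorem reflect_reflect (ν v : Sph n) : reflect ν (reflect ν v) = v := by
  ext : 1
  rw [coe_reflect, coe_reflect, inner_sub_left, real_inner_smul_left, real_inner_self_sphere]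
  module

theorem reflect_neg (ν v : Sph n) : reflect (-ν) v = reflect ν v := by
  ext : 1
  rw [coe_reflect, coe_reflect, coe_neg_sphere, inner_neg_right]
  module

theorem inner_reflect_sub_reflect (ν v w : Sph n) :
    ⟪(ν : Eu n), (reflect ν v : Eu n) - (reflect ν w : Eu n)⟫
      = -⟪(ν : Eu n), (v : Eu n) - (w : Eu n)⟫ := by
  simp only [coe_reflect, inner_sub_right, real_inner_smul_right, real_inner_self_sphere,
    real_inner_comm (ν : Eu n)]
  ring

noncomputable abbrev collisionMeasure (n : ℕ) : Measure (Sph n × Sph n × Sph n) :=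
  (sphereMeasure n).prod ((sphereMeasure n).prod (sphereMeasure n))

theorem integral_collisionMeasure {E : Type*} [NormedAddCommGroup E] [NormedSpace ℝ E]
    {F : Sph n × Sph n × Sph n → E} (hF : Integrable F (collisionMeasure n)) :
    ∫ z, F z ∂collisionMeasure n
      = ∫ v, ∫ w, ∫ ν, F (ν, v, w) ∂sphereMeasure n ∂sphereMeasure n ∂sphereMeasure n := by
  rw [integral_prod_symm F hF, integral_prod _ hF.integral_prod_right]

noncomputable def collisionMap (z : Sph n × Sph n × Sph n) : Sph n × Sph n × Sph n :=
  (-z.1, reflect z.1 z.2.1, reflect z.1 z.2.2)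

theorem collisionMap_involutive : Function.Involutive (collisionMap (n := n)) := fun z => by
  simp only [collisionMap, neg_neg, reflect_neg, reflect_reflect]

theorem continuous_collisionMap : Continuous (collisionMap (n := n)) := by
  unfold collisionMap
  fun_prop

theorem measurePreserving_collisionMap :
    MeasurePreserving (collisionMap (n := n)) (collisionMeasure n) (collisionMeasure n) :=
  measurePreserving_neg_sphere.skew_product
    (g := fun ν (vw : Sph n × Sph n) => (reflect ν vw.1, reflect ν vw.2))
    (Continuous.measurable (by fun_prop))
    (ae_of_all _ fun ν => ((measurePreserving_reflect ν).prod (measurePreserving_reflect ν)).map_eq)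

theorem measurableEmbedding_collisionMap : MeasurableEmbedding (collisionMap (n := n)) :=
  (MeasurableEquiv.ofInvolutive _ collisionMap_involutive
    continuous_collisionMap.measurable).measurableEmbedding

theorem integral_comp_collisionMap {E : Type*} [NormedAddCommGroup E] [NormedSpace ℝ E]
    (F : Sph n × Sph n × Sph n → E) :
    ∫ z, (F ∘ collisionMap) z ∂collisionMeasure n = ∫ z, F z ∂collisionMeasure n :=
  measurePreserving_collisionMap.integral_comp measurableEmbedding_collisionMap F

theorem integrable_comp_collisionMap_iff {E : Type*} [NormedAddCommGroup E]
    {F : Sph n × Sph n × Sph n → E} :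
    Integrable (F ∘ collisionMap) (collisionMeasure n) ↔ Integrable F (collisionMeasure n) :=
  measurePreserving_collisionMap.integrable_comp_emb measurableEmbedding_collisionMap

noncomputable def normalSpeed (z : Sph n × Sph n × Sph n) : ℝ :=
  max ⟪(z.1 : Eu n), (z.2.1 : Eu n) - (z.2.2 : Eu n)⟫ 0

@[fun_prop]
theorem continuous_normalSpeed : Continuous (normalSpeed (n := n)) := by
  unfold normalSpeed
  fun_prop

theorem normalSpeed_collisionMap (z : Sph n × Sph n × Sph n) :
    normalSpeed (collisionMap z) = normalSpeed z := by
  simp only [normalSpeed, collisionMap, coe_neg_sphere, inner_neg_left, inner_reflect_sub_reflect,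
    neg_neg]

theorem integral_integral_setIntegral_eq_integral_collisionMeasure {E : Type*}
    [NormedAddCommGroup E] [NormedSpace ℝ E] {F : Sph n × Sph n × Sph n → E}
    (hF : Integrable (fun z => normalSpeed z • F z) (collisionMeasure n)) :
    ∫ v, ∫ w, (∫ ν in {ν : Sph n | 0 < ⟪(ν : Eu n), (v : Eu n) - (w : Eu n)⟫},
        ⟪(ν : Eu n), (v : Eu n) - (w : Eu n)⟫ • F (ν, v, w)
        ∂sphereMeasure n) ∂sphereMeasure n ∂sphereMeasure n
      = ∫ z, normalSpeed z • F z ∂collisionMeasure n := by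
  rw [integral_collisionMeasure hF]
  congr 1 with v
  congr 1 with w
  exact setIntegral_pos_smul_eq_integral_max (by fun_prop) _

section WeakForm

variable {E : Type*} [NormedAddCommGroup E] [NormedSpace ℝ E] {p q : Sph n → ℝ}
  {ψ : Sph n → E}

theorem integrable_normalSpeed_smul_mul_smul (hp : Integrable p (sphereMeasure n))
    (hq : Integrable q (sphereMeasure n)) {u : Sph n × Sph n × Sph n → E} (hu : Continuous u) :
    Integrable (fun z => normalSpeed z • (p z.2.1 * q z.2.2) • u z) (collisionMeasure n) := by
  have hpq : Integrable (fun z : Sph n × Sph n × Sph n => p z.2.1 * q z.2.2)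
      (collisionMeasure n) := by
    simpa using (integrable_const (1 : ℝ)).mul_prod (hp.mul_prod hq)
  simp_rw [smul_comm (normalSpeed _)]
  exact hpq.smul_of_top_left
    (BoundedContinuousFunction.mkOfCompact ⟨fun z => normalSpeed z • u z, by fun_prop⟩).memLp_top

theorem normalSpeed_smul_gain_eq_comp_collisionMap :
    (fun z : Sph n × Sph n × Sph n =>
      normalSpeed z • (p (reflect z.1 z.2.1) * q (reflect z.1 z.2.2)) • ψ z.2.1)
      = (fun z => normalSpeed z • (p z.2.1 * q z.2.2) • ψ (reflect z.1 z.2.1)) ∘ collisionMap := by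
  ext z
  simp only [Function.comp_apply, normalSpeed_collisionMap]
  simp only [collisionMap, reflect_neg, reflect_reflect]

theorem integrable_normalSpeed_smul_gain (hp : Integrable p (sphereMeasure n))
    (hq : Integrable q (sphereMeasure n)) (hψ : Continuous ψ) :
    Integrable (fun z => normalSpeed z • (p (reflect z.1 z.2.1) * q (reflect z.1 z.2.2)) •
      ψ z.2.1) (collisionMeasure n) := by
  rw [normalSpeed_smul_gain_eq_comp_collisionMap, integrable_comp_collisionMap_iff]
  exact integrable_normalSpeed_smul_mul_smul hp hq (by fun_prop)

theorem integrable_normalSpeed_smul_gain_sub_loss (hp : Integrable p (sphereMeasure n))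
    (hq : Integrable q (sphereMeasure n)) (hψ : Continuous ψ) :
    Integrable (fun z => normalSpeed z •
      (p (reflect z.1 z.2.1) * q (reflect z.1 z.2.2) - p z.2.1 * q z.2.2) • ψ z.2.1)
      (collisionMeasure n) := by
  simp only [sub_smul, smul_sub]
  exact (integrable_normalSpeed_smul_gain hp hq hψ).sub
    (integrable_normalSpeed_smul_mul_smul hp hq (by fun_prop))

theorem integral_normalSpeed_smul_gain_sub_loss (hp : Integrable p (sphereMeasure n))
    (hq : Integrable q (sphereMeasure n)) (hψ : Continuous ψ) :
    ∫ z, normalSpeed z • (p (reflect z.1 z.2.1) * q (reflect z.1 z.2.2) - p z.2.1 * q z.2.2) •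
        ψ z.2.1 ∂collisionMeasure n
      = ∫ z, normalSpeed z • (p z.2.1 * q z.2.2) • (ψ (reflect z.1 z.2.1) - ψ z.2.1)
        ∂collisionMeasure n := by
  have hloss := integrable_normalSpeed_smul_mul_smul hp hq (u := fun z => ψ z.2.1) (by fun_prop)
  have hgain' := integrable_normalSpeed_smul_mul_smul hp hq
    (u := fun z => ψ (reflect z.1 z.2.1)) (by fun_prop)
  simp only [sub_smul, smul_sub]
  rw [integral_sub (integrable_normalSpeed_smul_gain hp hq hψ) hloss, integral_sub hgain' hloss,
    normalSpeed_smul_gain_eq_comp_collisionMap, integral_comp_collisionMap]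

end WeakForm

theorem conservative_interaction_first_moment_general (n : ℕ)
    (p q : Sph n → ℝ) (hp : Integrable p (sphereMeasure n))
    (hq : Integrable q (sphereMeasure n))
    (K : Sph n → ℝ)
    (hK : ∀ v : Sph n, K v =
      ∫ w, (∫ ν in {ν : Sph n | 0 < ⟪(ν : Eu n), (v : Eu n) - (w : Eu n)⟫},
        ⟪(ν : Eu n), (v : Eu n) - (w : Eu n)⟫ *
          (p (reflect ν v) * q (reflect ν w) - p v * q w)
        ∂(sphereMeasure n)) ∂(sphereMeasure n)) :
    ∫ v, K v • (v : Eu n) ∂(sphereMeasure n)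
      = (-2 : ℝ) • ∫ v, (∫ w,
          (∫ ν in {ν : Sph n | 0 < ⟪(ν : Eu n), (v : Eu n) - (w : Eu n)⟫},
            (⟪(v : Eu n), (ν : Eu n)⟫ * ⟪(ν : Eu n), (v : Eu n) - (w : Eu n)⟫ *
              (p v * q w)) • (ν : Eu n)
          ∂(sphereMeasure n)) ∂(sphereMeasure n)) ∂(sphereMeasure n) := by
  have hlhs (v : Sph n) : K v • (v : Eu n) =
      ∫ w, (∫ ν in {ν : Sph n | 0 < ⟪(ν : Eu n), (v : Eu n) - (w : Eu n)⟫},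
        ⟪(ν : Eu n), (v : Eu n) - (w : Eu n)⟫ •
          (p (reflect ν v) * q (reflect ν w) - p v * q w) • (v : Eu n)
        ∂sphereMeasure n) ∂sphereMeasure n := by
    simp only [hK, ← integral_smul_const, mul_smul]
  have hrhs (v w ν : Sph n) :
      (⟪(v : Eu n), (ν : Eu n)⟫ * ⟪(ν : Eu n), (v : Eu n) - (w : Eu n)⟫ * (p v * q w)) • (ν : Eu n)
        = ⟪(ν : Eu n), (v : Eu n) - (w : Eu n)⟫ •
            (p v * q w) • ⟪(v : Eu n), (ν : Eu n)⟫ • (ν : Eu n) := by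
    module
  simp_rw [hlhs, hrhs]
  rw [integral_integral_setIntegral_eq_integral_collisionMeasure
      (integrable_normalSpeed_smul_gain_sub_loss hp hq continuous_subtype_val),
    integral_integral_setIntegral_eq_integral_collisionMeasure
      (integrable_normalSpeed_smul_mul_smul hp hq
        (u := fun z => ⟪(z.2.1 : Eu n), (z.1 : Eu n)⟫ • (z.1 : Eu n)) (by fun_prop)),
    integral_normalSpeed_smul_gain_sub_loss hp hq continuous_subtype_val, ← integral_smul]
  congr 1 with z : 1
  rw [coe_reflect]
  module

/-- The first velocity moment of the conservative-interaction operator `K`: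
`∫_S v K(v) dσ(v) = −2 ∫∫∫ (v·ν)(ν·(v−w)) ν p(v) q(w)`. -/
theorem conservative_interaction_first_moment (n : ℕ) (hn : 2 ≤ n)
    (p q : Sph n → ℝ) (hp : Integrable p (sphereMeasure n))
    (hq : Integrable q (sphereMeasure n))
    (K : Sph n → ℝ)
    (hK : ∀ v : Sph n, K v =
      ∫ w, (∫ ν in {ν : Sph n | 0 < ⟪(ν : Eu n), (v : Eu n) - (w : Eu n)⟫},
        ⟪(ν : Eu n), (v : Eu n) - (w : Eu n)⟫ *
          (p (reflect ν v) * q (reflect ν w) - p v * q w)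
        ∂(sphereMeasure n)) ∂(sphereMeasure n)) :
    ∫ v, K v • (v : Eu n) ∂(sphereMeasure n)
      = (-2 : ℝ) • ∫ v, (∫ w,
          (∫ ν in {ν : Sph n | 0 < ⟪(ν : Eu n), (v : Eu n) - (w : Eu n)⟫},
            (⟪(v : Eu n), (ν : Eu n)⟫ * ⟪(ν : Eu n), (v : Eu n) - (w : Eu n)⟫ *
              (p v * q w)) • (ν : Eu n)
          ∂(sphereMeasure n)) ∂(sphereMeasure n)) ∂(sphereMeasure n) :=
  conservative_interaction_first_moment_general n p q hp hq K hK
end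

section
/- Let u, a ∈ ℝ² with u ≠ 0, and let S¹ ⊂ ℝ² be the unit circle with arclength measure σ. Then ∫_{ { ν ∈ S¹ : ν·u > 0 } } (a·ν) (ν·u) ν dσ(ν) = (2/3) ( ‖u‖ a + (a·u) u/‖u‖ ) (an identity between vectors in ℝ²). -/
open MeasureTheory Metric RealInnerProductSpace

/-- `ℝ²` as a Euclidean space. -/
abbrev Eu2 := EuclideanSpace ℝ (Fin 2)

/-- The unit circle `S¹ ⊂ ℝ²`. -/
abbrev Circ := Metric.sphere (0 : Eu2) 1

/-- The arclength (surface) measure `σ` on the unit circle `S¹ ⊂ ℝ²`. -/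
noncomputable def circleMeasure : Measure Circ :=
  (volume : Measure Eu2).toSphere

/-!
Write `u = ‖u‖ e` with `e = (cos α, sin α)` and let `e'` be `e` turned by `π / 2`. Parametrizing
`S¹` by `ν = cos φ e + sin φ e'`, the half circle `ν·u > 0` is `|φ| < π / 2` and the integrand is
`‖u‖ cos φ (P cos φ + Q sin φ) (cos φ e + sin φ e')` with `P = a·e`, `Q = a·e'`. Since
`∫ cos³ = 4/3`, `∫ cos² sin = 0` and `∫ cos sin² = 2/3` over `[-π/2, π/2]`, the integral is
`(2/3) ‖u‖ (2P e + Q e') = (2/3) (‖u‖ a + (a·u) u / ‖u‖)`, because `a = P e + Q e'`.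

That the angle parametrization carries `σ = volume.toSphere` to `dφ` on `(-π, π)` follows by
computing `∫ w(‖x‖) G(x / ‖x‖) dx` once in the decomposition `dx = dσ(ν) r dr` and once in polar
coordinates, for a radial weight `w` with `∫ r w(r) dr ≠ 0`.
-/

open Real Set

noncomputable def circleVec (θ : ℝ) : Eu2 := !₂[cos θ, sin θ]

@[simp] lemma circleVec_apply_zero (θ : ℝ) : circleVec θ 0 = cos θ := rfl
@[simp] lemma circleVec_apply_one (θ : ℝ) : circleVec θ 1 = sin θ := rfl

lemma norm_circleVec (θ : ℝ) : ‖circleVec θ‖ = 1 := by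
  simp [circleVec, EuclideanSpace.norm_eq, Fin.sum_univ_two, sq_abs]

lemma circleVec_add (φ α : ℝ) :
    circleVec (φ + α) = cos φ • circleVec α + sin φ • circleVec (α + π / 2) := by
  ext i; fin_cases i <;> simp [cos_add, sin_add] <;> ring

lemma circleVec_add_two_pi (θ : ℝ) : circleVec (θ + 2 * π) = circleVec θ := by
  simp [circleVec]

lemma inner_circleVec (θ α : ℝ) : ⟪circleVec θ, circleVec α⟫ = cos (θ - α) := by
  simp [PiLp.inner_apply, Fin.sum_univ_two, cos_sub]
  ring

lemma inner_smul_circleVec_add_inner_smul_circleVec_add_pi_div_two (a : Eu2) (α : ℝ) :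
    ⟪a, circleVec α⟫ • circleVec α + ⟪a, circleVec (α + π / 2)⟫ • circleVec (α + π / 2) = a := by
  ext i; fin_cases i <;> simp only [Fin.zero_eta, Fin.mk_one, PiLp.add_apply, PiLp.smul_apply,
    smul_eq_mul, PiLp.inner_apply, Fin.sum_univ_two, circleVec_apply_zero, circleVec_apply_one,
    cos_add_pi_div_two, sin_add_pi_div_two, RCLike.inner_apply, conj_trivial]
  · linear_combination a 0 * sin_sq_add_cos_sq α
  · linear_combination a 1 * sin_sq_add_cos_sq α

lemma exists_circleVec_eq {w : Eu2} (hw : ‖w‖ = 1) : ∃ α, circleVec α = w := by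
  set z : ℂ := ⟨w 0, w 1⟩
  have hz : ‖z‖ = 1 := by
    rw [← hw, Complex.norm_def, Complex.normSq_mk, EuclideanSpace.norm_eq, Fin.sum_univ_two]
    simp [sq]
  have hz0 : z ≠ 0 := norm_ne_zero_iff.1 (hz ▸ one_ne_zero)
  refine ⟨z.arg, ?_⟩
  ext i; fin_cases i
  · simp [Complex.cos_arg hz0, hz, z]
  · simp [Complex.sin_arg, hz, z]

instance : IsFiniteMeasure circleMeasure := by
  unfold circleMeasure; infer_instance

variable {E : Type*} [NormedAddCommGroup E] [NormedSpace ℝ E]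

lemma integral_volumeIoiPow_one (f : ℝ → E) :
    ∫ r, f r ∂(Measure.volumeIoiPow 1) = ∫ r in Ioi (0 : ℝ), r • f r := by
  rw [Measure.volumeIoiPow, integral_withDensity_eq_integral_toReal_smul
      (measurable_subtype_coe.pow_const 1).ennreal_ofReal (by simp),
    integral_subtype_comap measurableSet_Ioi fun r : ℝ ↦ (ENNReal.ofReal (r ^ 1)).toReal • f r]
  refine setIntegral_congr_fun measurableSet_Ioi fun r hr ↦ ?_
  simp [ENNReal.toReal_ofReal (le_of_lt hr)]

lemma integral_radial_smul_eq_smul_integral_circleMeasure (w : ℝ → ℝ) (G : Eu2 → E) :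
    ∫ x : Eu2, w ‖x‖ • G (‖x‖⁻¹ • x)
      = (∫ r in Ioi (0 : ℝ), r * w r) • ∫ ν, G ν ∂circleMeasure := by
  have hprod : ∫ z : Circ × Ioi (0 : ℝ), w z.2 • G z.1 ∂(circleMeasure.prod (.volumeIoiPow 1))
      = (∫ r in Ioi (0 : ℝ), r * w r) • ∫ ν, G ν ∂circleMeasure := by
    rw [← integral_prod_swap]
    exact (integral_prod_smul (fun r : Ioi (0 : ℝ) ↦ w r) fun ν : Circ ↦ G ν).trans
      (by rw [integral_volumeIoiPow_one]; rfl)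
  have hspherical := (Measure.measurePreserving_homeomorphUnitSphereProd
      (volume : Measure Eu2)).integral_comp (Homeomorph.measurableEmbedding _)
      fun z ↦ w z.2 • G z.1
  rw [finrank_euclideanSpace_fin, ← circleMeasure, hprod] at hspherical
  rw [← restrict_compl_singleton (μ := volume) (0 : Eu2), ← integral_subtype_comap
    (measurableSet_singleton 0).compl, ← hspherical]
  congr with x
  simp [homeomorphUnitSphereProd]

lemma integral_radial_smul_eq_smul_integral_angle (w : ℝ → ℝ) (G : Eu2 → E) :
    ∫ x : Eu2, w ‖x‖ • G (‖x‖⁻¹ • x)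
      = (∫ r in Ioi (0 : ℝ), r * w r) • ∫ θ in Ioo (-π) π, G (circleVec θ) := by
  set F : Eu2 → E := fun x ↦ w ‖x‖ • G (‖x‖⁻¹ • x)
  have hcart : MeasurePreserving (fun p : ℝ × ℝ ↦ !₂[p.1, p.2]) :=
    ((EuclideanSpace.volume_preserving_symm_measurableEquiv_toLp (Fin 2)).trans
      (volume_preserving_finTwoArrow ℝ)).symm _
  have hcart_emb : MeasurableEmbedding (fun p : ℝ × ℝ ↦ !₂[p.1, p.2]) :=
    ((MeasurableEquiv.toLp 2 (Fin 2 → ℝ)).symm.trans MeasurableEquiv.finTwoArrow).symm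
      |>.measurableEmbedding
  have hpolar (p : ℝ × ℝ) (hp : p ∈ polarCoord.target) :
      p.1 • F !₂[(polarCoord.symm p).1, (polarCoord.symm p).2]
        = (p.1 * w p.1) • G (circleVec p.2) := by
    have hr : 0 < p.1 := hp.1
    have hvec : !₂[(polarCoord.symm p).1, (polarCoord.symm p).2] = p.1 • circleVec p.2 := by
      ext i; fin_cases i <;> simp [polarCoord_symm_apply]
    simp only [F, hvec, norm_smul, norm_circleVec, Real.norm_eq_abs, abs_of_pos hr, mul_one,
      smul_smul, inv_mul_cancel₀ hr.ne', one_smul]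
  rw [← hcart.integral_comp hcart_emb, ← integral_comp_polarCoord_symm,
    setIntegral_congr_fun polarCoord.open_target.measurableSet hpolar, polarCoord_target,
    Measure.volume_eq_prod, ← Measure.prod_restrict]
  exact integral_prod_smul (fun r : ℝ ↦ r * w r) fun θ : ℝ ↦ G (circleVec θ)

lemma integral_mul_indicator_Ioc_zero_one :
    ∫ r in Ioi (0 : ℝ), r * (Ioc (0 : ℝ) 1).indicator 1 r = 1 / 2 := by
  have h (r : ℝ) : r * (Ioc (0 : ℝ) 1).indicator 1 r = (Ioc (0 : ℝ) 1).indicator id r := by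
    by_cases hr : r ∈ Ioc (0 : ℝ) 1 <;> simp [hr]
  simp_rw [h]
  rw [setIntegral_indicator measurableSet_Ioc, inter_eq_right.2 Ioc_subset_Ioi_self,
    ← intervalIntegral.integral_of_le zero_le_one]
  norm_num

theorem integral_circleMeasure_eq_intervalIntegral (G : Eu2 → E) :
    ∫ ν, G ν ∂circleMeasure = ∫ θ in -π..π, G (circleVec θ) := by
  have h := (integral_radial_smul_eq_smul_integral_circleMeasure _ G).symm.trans
    (integral_radial_smul_eq_smul_integral_angle ((Ioc (0 : ℝ) 1).indicator 1) G)
  rw [integral_mul_indicator_Ioc_zero_one] at h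
  rw [smul_right_injective E (by norm_num) h,
    intervalIntegral.integral_of_le (by linarith [pi_pos]), integral_Ioc_eq_integral_Ioo]

theorem integral_circleMeasure_eq_intervalIntegral_add (G : Eu2 → E) (α : ℝ) :
    ∫ ν, G ν ∂circleMeasure = ∫ θ in -π..π, G (circleVec (θ + α)) := by
  have hper : Function.Periodic (fun θ ↦ G (circleVec θ)) (2 * π) := fun θ ↦ by
    simp only [circleVec_add_two_pi]
  rw [integral_circleMeasure_eq_intervalIntegral,
    intervalIntegral.integral_comp_add_right (fun θ ↦ G (circleVec θ)),
    show π + α = -π + α + 2 * π by ring, hper.intervalIntegral_add_eq (-π + α) (-π),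
    show -π + 2 * π = π by ring]

lemma intervalIntegral_indicator_cos_pos (f : ℝ → E) :
    ∫ θ in -π..π, {θ | 0 < cos θ}.indicator f θ = ∫ θ in -(π / 2)..π / 2, f θ := by
  have hhalf : Ioc (-π) π ∩ {θ | 0 < cos θ} = Ioo (-(π / 2)) (π / 2) := by
    ext θ
    simp only [mem_inter_iff, mem_Ioc, mem_ofPred_eq, mem_Ioo]
    constructor
    · rintro ⟨⟨hlo, hhi⟩, hcos⟩
      constructor
      · by_contra! h
        have := cos_nonpos_of_pi_div_two_le_of_le (x := -θ) (by linarith) (by linarith)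
        rw [cos_neg] at this
        linarith
      · by_contra! h
        linarith [cos_nonpos_of_pi_div_two_le_of_le h (by linarith)]
    · intro hθ
      exact ⟨⟨by linarith [hθ.1, pi_pos], by linarith [hθ.2, pi_pos]⟩, cos_pos_of_mem_Ioo hθ⟩
  rw [intervalIntegral.integral_of_le (by linarith [pi_pos]),
    intervalIntegral.integral_of_le (by linarith [pi_pos]),
    setIntegral_indicator (measurableSet_lt measurable_const continuous_cos.measurable), hhalf,
    integral_Ioc_eq_integral_Ioo]

lemma intervalIntegral_cos_mul_smul_cos_smul_add_sin_smul [CompleteSpace E] (p q : ℝ) (x y : E) :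
    ∫ φ in -(π / 2)..π / 2, (cos φ * (p * cos φ + q * sin φ)) • (cos φ • x + sin φ • y)
      = (2 / 3 : ℝ) • ((2 * p) • x + q • y) := by
  have hexpand (φ : ℝ) : (cos φ * (p * cos φ + q * sin φ)) • (cos φ • x + sin φ • y)
      = cos φ ^ 3 • (p • x) + (sin φ * cos φ ^ 2) • (q • x + p • y)
        + (sin φ ^ 2 * cos φ) • (q • y) := by
    module
  have hint {g : ℝ → ℝ} (hg : Continuous g) (v : E) (a b : ℝ) :
      IntervalIntegrable (fun φ ↦ g φ • v) volume a b :=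
    (hg.smul continuous_const).intervalIntegrable a b
  simp_rw [hexpand]
  rw [intervalIntegral.integral_add ((hint (by fun_prop) _ _ _).add (hint (by fun_prop) _ _ _))
      (hint (by fun_prop) _ _ _),
    intervalIntegral.integral_add (hint (by fun_prop) _ _ _) (hint (by fun_prop) _ _ _)]
  simp only [intervalIntegral.integral_smul_const, integral_cos_pow_three, integral_sin_mul_cos_sq,
    integral_sin_sq_mul_cos, sin_neg, cos_neg, sin_pi_div_two, cos_pi_div_two]
  module

lemma setIntegral_inner_pos_smul_circleVec {r : ℝ} (hr : 0 < r) (α : ℝ) (a : Eu2) :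
    ∫ ν in {ν : Circ | 0 < ⟪(ν : Eu2), r • circleVec α⟫},
        (⟪a, (ν : Eu2)⟫ * ⟪(ν : Eu2), r • circleVec α⟫) • (ν : Eu2) ∂circleMeasure
      = r • (2 / 3 : ℝ) • ((2 * ⟪a, circleVec α⟫) • circleVec α
          + ⟪a, circleVec (α + π / 2)⟫ • circleVec (α + π / 2)) := by
  set e := circleVec α
  set e' := circleVec (α + π / 2)
  have hinner_u (φ : ℝ) : ⟪circleVec (φ + α), r • e⟫ = r * cos φ := by
    rw [real_inner_smul_right, inner_circleVec, add_sub_cancel_right]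
  have hinner_a (φ : ℝ) : ⟪a, circleVec (φ + α)⟫ = ⟪a, e⟫ * cos φ + ⟪a, e'⟫ * sin φ := by
    rw [circleVec_add, inner_add_right, real_inner_smul_right, real_inner_smul_right]
    ring
  set F : Eu2 → Eu2 := {x | 0 < ⟪x, r • e⟫}.indicator fun x ↦ (⟪a, x⟫ * ⟪x, r • e⟫) • x
  have hangle (φ : ℝ) : F (circleVec (φ + α)) = {φ | 0 < cos φ}.indicator (fun φ ↦ r •
      (cos φ * (⟪a, e⟫ * cos φ + ⟪a, e'⟫ * sin φ)) • (cos φ • e + sin φ • e')) φ := by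
    simp only [F, indicator, mem_ofPred_eq, hinner_u, hinner_a, mul_pos_iff_of_pos_left hr,
      smul_smul]
    rw [circleVec_add]
    congr 2
    ring
  rw [← integral_indicator (measurableSet_lt measurable_const (by fun_prop))]
  change ∫ ν, F ν ∂circleMeasure = _
  rw [integral_circleMeasure_eq_intervalIntegral_add F α]
  simp_rw [hangle]
  rw [intervalIntegral_indicator_cos_pos, intervalIntegral.integral_smul,
    intervalIntegral_cos_mul_smul_cos_smul_add_sin_smul]

/-- Vector-valued half-circle integral: for `u ≠ 0` and any `a ∈ ℝ²`,
`∫_{ν ∈ S¹ : ν·u > 0} (a·ν)(ν·u) ν dσ(ν) = (2/3)(‖u‖ a + (a·u) u/‖u‖)`. -/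
theorem half_circle_vector_integral (u a : Eu2) (hu : u ≠ 0) :
    ∫ ν in {ν : Circ | 0 < ⟪(ν : Eu2), u⟫},
        (⟪a, (ν : Eu2)⟫ * ⟪(ν : Eu2), u⟫) • (ν : Eu2) ∂circleMeasure
      = (2 / 3 : ℝ) • (‖u‖ • a + (⟪a, u⟫ / ‖u‖) • u) := by
  have hnorm : 0 < ‖u‖ := norm_pos_iff.2 hu
  obtain ⟨α, hα⟩ := exists_circleVec_eq (w := ‖u‖⁻¹ • u) <| by
    rw [norm_smul, norm_inv, norm_norm, inv_mul_cancel₀ hnorm.ne']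
  have hu_eq : u = ‖u‖ • circleVec α := by
    rw [hα, smul_smul, mul_inv_cancel₀ hnorm.ne', one_smul]
  have hinner : ⟪a, u⟫ / ‖u‖ = ⟪a, circleVec α⟫ := by
    rw [hα, real_inner_smul_right, inv_mul_eq_div]
  have hexpand := (inner_smul_circleVec_add_inner_smul_circleVec_add_pi_div_two a α).symm
  conv_lhs => rw [hu_eq]
  rw [setIntegral_inner_pos_smul_circleVec hnorm, hinner]
  linear_combination (norm := module)
    (-(2 / 3) * ‖u‖) • hexpand - (2 / 3 * ⟪a, circleVec α⟫) • hu_eq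
end
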